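/- Let f : (0,∞) → ℝ be n-monotone, n ≥ 2, smooth, with f and its first n derivatives tending to 0 suitably at infinity, and f(0⁺) = 1. Define H(u) = Σ_{j=0}^{n-1} ((-1)^j f^{(j)}(1/u)/j!) (1/u)^j for u > 0. Then f(x) = ∫₀^∞ (1 - ux)₊^{n-1} dH(u) for all x > 0. -/

import Mathlib

open MeasureTheory Real Filter Set

noncomputable def SWg (f : ℝ → ℝ) (k : ℕ) : ℝ → ℝ := iteratedDerivWithin k f (Set.Ioi 0)

noncomputable def SWh (f : ℝ → ℝ) (n : ℕ) (u : ℝ) : ℝ :=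
  (-1)^n * SWg f n u⁻¹ / (Nat.factorial (n-1)) * (u⁻¹)^(n+1)

lemma SWg_hasDerivAt (f : ℝ → ℝ) (hsmooth : ContDiffOn ℝ (⊤ : ℕ∞) f (Set.Ioi 0)) (k : ℕ)
    {x : ℝ} (hx : 0 < x) : HasDerivAt (SWg f k) (SWg f (k+1) x) x := by
  have hu : UniqueDiffOn ℝ (Set.Ioi (0:ℝ)) := isOpen_Ioi.uniqueDiffOn
  have hd : DifferentiableOn ℝ (SWg f k) (Set.Ioi 0) :=
    hsmooth.differentiableOn_iteratedDerivWithin (by exact_mod_cast WithTop.coe_lt_top _) hu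
  have h1 : DifferentiableAt ℝ (SWg f k) x :=
    (hd x hx).differentiableAt (isOpen_Ioi.mem_nhds hx)
  have h2 : SWg f (k+1) x = deriv (SWg f k) x := by
    rw [SWg, iteratedDerivWithin_succ,
      derivWithin_of_isOpen isOpen_Ioi hx]
    rfl
  rw [h2]; exact h1.hasDerivAt

lemma SWg_continuousOn (f : ℝ → ℝ) (hsmooth : ContDiffOn ℝ (⊤ : ℕ∞) f (Set.Ioi 0)) (k : ℕ) :
    ContinuousOn (SWg f k) (Set.Ioi 0) := fun x hx =>
  ((SWg_hasDerivAt f hsmooth k hx).continuousAt).continuousWithinAt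

lemma SWh_continuousOn (f : ℝ → ℝ) (hsmooth : ContDiffOn ℝ (⊤ : ℕ∞) f (Set.Ioi 0)) (n : ℕ) :
    ContinuousOn (SWh f n) (Set.Ioi 0) := by
  apply ContinuousOn.mul
  · apply ContinuousOn.div
    · exact continuousOn_const.mul <| (SWg_continuousOn f hsmooth n).comp
        (continuousOn_inv₀.mono (by intro x hx; exact ne_of_gt hx))
        (fun x hx => Set.mem_Ioi.2 (inv_pos.2 hx))
    · exact continuousOn_const
    · intro x hx; positivity
  · exact ((continuousOn_inv₀.mono (fun x hx => ne_of_gt hx)).pow _)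

noncomputable def SWB (f : ℝ → ℝ) : ℕ → ℝ → ℝ
  | 0 => fun _ => 0
  | (j+1) => fun u => (-1)^(j+1) * SWg f (j+1) u⁻¹ / (Nat.factorial j) * (u⁻¹)^(j+2)

lemma SWterm_hasDerivAt (f : ℝ → ℝ) (hsmooth : ContDiffOn ℝ (⊤ : ℕ∞) f (Set.Ioi 0)) (j : ℕ)
    {u : ℝ} (hu : 0 < u) :
    HasDerivAt (fun v => (-1:ℝ)^j * SWg f j (1/v) / (Nat.factorial j) * (1/v)^j)
      (SWB f (j+1) u - SWB f j u) u := by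
  simp only [one_div]
  have hg : HasDerivAt (fun v : ℝ => SWg f j v⁻¹) (SWg f (j+1) u⁻¹ * -(u^2)⁻¹) u :=
    (SWg_hasDerivAt f hsmooth j (inv_pos.2 hu)).comp u (hasDerivAt_inv hu.ne')
  have hpow : HasDerivAt (fun v : ℝ => (v⁻¹)^j) ((j:ℝ) * (u⁻¹)^(j-1) * -(u^2)⁻¹) u :=
    (hasDerivAt_inv hu.ne').pow j
  have hmain := ((hg.const_mul ((-1:ℝ)^j)).div_const (Nat.factorial j)).fun_mul hpow
  refine hmain.congr_deriv ?_
  symm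
  have hu0 : u ≠ 0 := hu.ne'
  cases j with
  | zero => simp [SWB]
  | succ m =>
      simp only [SWB, Nat.add_sub_cancel]
      have hfac : ((Nat.factorial (m+1) : ℝ)) = (m+1) * (Nat.factorial m : ℝ) := by
        push_cast [Nat.factorial_succ]; ring
      rw [hfac]
      push_cast
      simp only [← inv_pow]
      generalize u⁻¹ = v
      field_simp
      ring

lemma SWH_hasDerivAt (f : ℝ → ℝ) (n : ℕ) (hn : 2 ≤ n)
    (hsmooth : ContDiffOn ℝ (⊤ : ℕ∞) f (Set.Ioi 0)) (H : StieltjesFunction ℝ)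
    (hH : ∀ u > (0:ℝ), H u =
      ∑ j ∈ Finset.range n,
        (-1 : ℝ) ^ j * iteratedDerivWithin j f (Set.Ioi 0) (1 / u) / (Nat.factorial j) *
          (1 / u) ^ j)
    {u : ℝ} (hu : 0 < u) : HasDerivAt H (SWh f n u) u := by
  have hsum : HasDerivAt
      (fun v => ∑ j ∈ Finset.range n,
        (-1 : ℝ) ^ j * SWg f j (1/v) / (Nat.factorial j) * (1/v)^j)
      (∑ j ∈ Finset.range n, (SWB f (j+1) u - SWB f j u)) u :=
    HasDerivAt.fun_sum (fun j _ => SWterm_hasDerivAt f hsmooth j hu)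
  have htel : (∑ j ∈ Finset.range n, (SWB f (j+1) u - SWB f j u)) = SWh f n u := by
    rw [Finset.sum_range_sub (fun j => SWB f j u) n]
    obtain ⟨m, rfl⟩ : ∃ m, n = m + 1 := ⟨n-1, by omega⟩
    simp [SWB, SWh]
  rw [htel] at hsum
  apply hsum.congr_of_eventuallyEq
  filter_upwards [isOpen_Ioi.mem_nhds hu] with v hv
  exact hH v hv

lemma SWH_tendsto_zero (f : ℝ → ℝ) (n : ℕ)
    (hdecay : ∀ k ≤ n, Tendsto (fun x => x ^ k * iteratedDerivWithin k f (Set.Ioi 0) x)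
      atTop (nhds 0))
    (H : StieltjesFunction ℝ)
    (hH : ∀ u > (0:ℝ), H u =
      ∑ j ∈ Finset.range n,
        (-1 : ℝ) ^ j * iteratedDerivWithin j f (Set.Ioi 0) (1 / u) / (Nat.factorial j) *
          (1 / u) ^ j) :
    Tendsto H (nhdsWithin 0 (Set.Ioi 0)) (nhds 0) := by
  have key : Tendsto (fun u => ∑ j ∈ Finset.range n,
      (-1 : ℝ) ^ j * SWg f j (1/u) / (Nat.factorial j) * (1/u)^j)
      (nhdsWithin 0 (Set.Ioi 0)) (nhds 0) := by
    have h0 : Tendsto (fun u => ∑ j ∈ Finset.range n,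
        (-1 : ℝ) ^ j * SWg f j (1/u) / (Nat.factorial j) * (1/u)^j)
        (nhdsWithin 0 (Set.Ioi 0)) (nhds (∑ j ∈ Finset.range n, (0:ℝ))) := by
      apply tendsto_finset_sum
      intro j hj
      have hj' : j ≤ n := (Finset.mem_range.1 hj).le
      have h1 : Tendsto (fun u : ℝ => (1/u)) (nhdsWithin 0 (Set.Ioi 0)) atTop := by
        simpa [one_div] using tendsto_inv_nhdsGT_zero (𝕜 := ℝ)
      have h2 : Tendsto (fun u : ℝ => (1/u)^j * SWg f j (1/u)) (nhdsWithin 0 (Set.Ioi 0))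
          (nhds 0) := (hdecay j hj').comp h1
      have := h2.const_mul ((-1:ℝ)^j / (Nat.factorial j))
      simp only [mul_zero] at this
      apply this.congr
      intro u; ring
    simpa using h0
  apply key.congr'
  filter_upwards [self_mem_nhdsWithin] with u hu
  exact (hH u hu).symm

lemma SWH_zero (f : ℝ → ℝ) (n : ℕ)
    (hdecay : ∀ k ≤ n, Tendsto (fun x => x ^ k * iteratedDerivWithin k f (Set.Ioi 0) x)
      atTop (nhds 0))
    (H : StieltjesFunction ℝ)
    (hH : ∀ u > (0:ℝ), H u =
      ∑ j ∈ Finset.range n,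
        (-1 : ℝ) ^ j * iteratedDerivWithin j f (Set.Ioi 0) (1 / u) / (Nat.factorial j) *
          (1 / u) ^ j) : H 0 = 0 := by
  have h1 : Tendsto H (nhdsWithin 0 (Set.Ioi 0)) (nhds (H 0)) :=
    ((H.right_continuous 0).tendsto).mono_left (nhdsWithin_mono 0 Ioi_subset_Ici_self)
  exact tendsto_nhds_unique h1 (SWH_tendsto_zero f n hdecay H hH)

lemma SW_sign (f : ℝ → ℝ) (n : ℕ) (hn : 2 ≤ n)
    (hsmooth : ContDiffOn ℝ (⊤ : ℕ∞) f (Set.Ioi 0)) (H : StieltjesFunction ℝ)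
    (hH : ∀ u > (0:ℝ), H u =
      ∑ j ∈ Finset.range n,
        (-1 : ℝ) ^ j * iteratedDerivWithin j f (Set.Ioi 0) (1 / u) / (Nat.factorial j) *
          (1 / u) ^ j)
    {t : ℝ} (ht : 0 < t) : 0 ≤ (-1:ℝ)^n * SWg f n t := by
  have hu : (0:ℝ) < t⁻¹ := inv_pos.2 ht
  have hd := SWH_hasDerivAt f n hn hsmooth H hH hu
  have hnonneg : 0 ≤ SWh f n t⁻¹ := by
    rw [hasDerivAt_iff_tendsto_slope] at hd
    refine ge_of_tendsto hd ?_
    filter_upwards [self_mem_nhdsWithin] with y hy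
    rcases lt_or_gt_of_ne (Set.mem_compl hy : y ≠ t⁻¹) with h | h
    · rw [slope_def_field]
      apply div_nonneg_of_nonpos (by simp only [sub_nonpos]; exact H.mono h.le) (by linarith)
    · rw [slope_def_field]
      apply div_nonneg
      · simp only [sub_nonneg]; exact H.mono h.le
      · linarith
  rw [SWh, inv_inv] at hnonneg
  by_contra hA
  push_neg at hA
  have hc : (0:ℝ) < (Nat.factorial (n-1) : ℝ) := by positivity
  have hp : (0:ℝ) < t^(n+1) := by positivity
  have : (-1:ℝ)^n * SWg f n t / (Nat.factorial (n-1)) * t^(n+1) < 0 :=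
    mul_neg_of_neg_of_pos (div_neg_of_neg_of_pos hA hc) hp
  linarith

lemma SW_ftc (f : ℝ → ℝ) (n : ℕ) (hn : 2 ≤ n)
    (hsmooth : ContDiffOn ℝ (⊤ : ℕ∞) f (Set.Ioi 0)) (H : StieltjesFunction ℝ)
    (hH : ∀ u > (0:ℝ), H u =
      ∑ j ∈ Finset.range n,
        (-1 : ℝ) ^ j * iteratedDerivWithin j f (Set.Ioi 0) (1 / u) / (Nat.factorial j) *
          (1 / u) ^ j)
    {a b : ℝ} (ha : 0 < a) (hab : a ≤ b) :
    ∫ u in a..b, SWh f n u = H b - H a := by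
  have hIcc : Set.uIcc a b ⊆ Set.Ioi 0 := by
    rw [Set.uIcc_of_le hab]
    intro y hy; exact lt_of_lt_of_le ha hy.1
  apply intervalIntegral.integral_eq_sub_of_hasDerivAt
  · intro y hy
    exact SWH_hasDerivAt f n hn hsmooth H hH (hIcc hy)
  · exact ((SWh_continuousOn f hsmooth n).mono hIcc).intervalIntegrable

lemma SW_nu_Ioc (f : ℝ → ℝ) (n : ℕ) (hn : 2 ≤ n)
    (hsmooth : ContDiffOn ℝ (⊤ : ℕ∞) f (Set.Ioi 0)) (H : StieltjesFunction ℝ)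
    (hH : ∀ u > (0:ℝ), H u =
      ∑ j ∈ Finset.range n,
        (-1 : ℝ) ^ j * iteratedDerivWithin j f (Set.Ioi 0) (1 / u) / (Nat.factorial j) *
          (1 / u) ^ j)
    {a b : ℝ} (ha : 0 < a) (hab : a ≤ b) :
    (volume.restrict (Set.Ioi 0)).withDensity (fun u => ENNReal.ofReal (SWh f n u))
      (Set.Ioc a b) = ENNReal.ofReal (H b - H a) := by
  rw [withDensity_apply _ measurableSet_Ioc, Measure.restrict_restrict measurableSet_Ioc]
  have hsub : Set.Ioc a b ∩ Set.Ioi 0 = Set.Ioc a b := by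
    apply Set.inter_eq_self_of_subset_left
    intro y hy; exact lt_of_lt_of_le ha hy.1.le
  rw [hsub]
  have hIoc : Set.Ioc a b ⊆ Set.Ioi 0 := fun y hy => lt_of_lt_of_le ha hy.1.le
  have hint : IntegrableOn (SWh f n) (Set.Ioc a b) := by
    apply ((SWh_continuousOn f hsmooth n).mono ?_).integrableOn_Icc.mono_set Set.Ioc_subset_Icc_self
    intro y hy; exact lt_of_lt_of_le ha hy.1
  have hnn : 0 ≤ᵐ[volume.restrict (Set.Ioc a b)] SWh f n := by
    rw [Filter.EventuallyLE, ae_restrict_iff' measurableSet_Ioc]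
    filter_upwards with u hu
    have hu0 : 0 < u := lt_of_lt_of_le ha hu.1.le
    have hs := SW_sign f n hn hsmooth H hH (inv_pos.2 hu0)
    have hc : (0:ℝ) < (Nat.factorial (n-1) : ℝ) := by positivity
    have hp : (0:ℝ) < (u⁻¹)^(n+1) := by positivity
    simp only [Pi.zero_apply, SWh]
    exact mul_nonneg (div_nonneg hs hc.le) hp.le
  rw [← ofReal_integral_eq_lintegral_ofReal hint hnn]
  congr 1
  rw [← intervalIntegral.integral_of_le hab]
  exact SW_ftc f n hn hsmooth H hH ha hab

lemma SW_measure_eq (f : ℝ → ℝ) (n : ℕ) (hn : 2 ≤ n)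
    (hsmooth : ContDiffOn ℝ (⊤ : ℕ∞) f (Set.Ioi 0))
    (hdecay : ∀ k ≤ n, Tendsto (fun x => x ^ k * iteratedDerivWithin k f (Set.Ioi 0) x)
      atTop (nhds 0))
    (H : StieltjesFunction ℝ)
    (hH : ∀ u > (0:ℝ), H u =
      ∑ j ∈ Finset.range n,
        (-1 : ℝ) ^ j * iteratedDerivWithin j f (Set.Ioi 0) (1 / u) / (Nat.factorial j) *
          (1 / u) ^ j) :
    H.measure.restrict (Set.Ioi 0) =
      (volume.restrict (Set.Ioi 0)).withDensity (fun u => ENNReal.ofReal (SWh f n u)) := by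
  have hH0 : H 0 = 0 := SWH_zero f n hdecay H hH
  apply Measure.ext_of_Ioc'
  · intro a b _
    rw [Measure.restrict_apply measurableSet_Ioc]
    refine ne_of_lt (lt_of_le_of_lt (measure_mono Set.inter_subset_left) ?_)
    rw [H.measure_Ioc]
    exact ENNReal.ofReal_lt_top
  · intro a b hab
    rw [Measure.restrict_apply measurableSet_Ioc]
    rcases le_or_gt b 0 with hb | hb
    · have h1 : Set.Ioc a b ∩ Set.Ioi 0 = ∅ := by
        ext y; simp only [Set.mem_inter_iff, Set.mem_Ioc, Set.mem_Ioi, Set.mem_empty_iff_false,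
          iff_false]
        rintro ⟨⟨_, hy2⟩, hy3⟩; linarith
      have h2 : Set.Ioc a b ∩ Set.Ioi 0 = Set.Ioc a b ∩ Set.Ioi 0 := rfl
      rw [h1, measure_empty]
      symm
      rw [withDensity_apply _ measurableSet_Ioc, Measure.restrict_restrict measurableSet_Ioc,
        h1]
      simp
    rcases lt_or_ge 0 a with ha | ha
    · have h1 : Set.Ioc a b ∩ Set.Ioi 0 = Set.Ioc a b :=
        Set.inter_eq_self_of_subset_left (fun y hy => lt_trans ha hy.1)
      rw [h1, H.measure_Ioc, SW_nu_Ioc f n hn hsmooth H hH ha hab.le]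
    · -- a ≤ 0 < b
      have h1 : Set.Ioc a b ∩ Set.Ioi 0 = Set.Ioc 0 b := by
        ext y; simp only [Set.mem_inter_iff, Set.mem_Ioc, Set.mem_Ioi]
        constructor
        · rintro ⟨⟨_, hy2⟩, hy3⟩; exact ⟨hy3, hy2⟩
        · rintro ⟨hy1, hy2⟩; exact ⟨⟨lt_of_le_of_lt ha hy1, hy2⟩, hy1⟩
      rw [h1, H.measure_Ioc, hH0, sub_zero]
      -- now compute ν (Ioc a b) via union
      set ν := (volume.restrict (Set.Ioi 0)).withDensity (fun u => ENNReal.ofReal (SWh f n u))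
        with hν
      have hrw : ν (Set.Ioc a b) = ν (Set.Ioc 0 b) := by
        rw [hν, withDensity_apply _ measurableSet_Ioc,
          withDensity_apply _ measurableSet_Ioc,
          Measure.restrict_restrict measurableSet_Ioc,
          Measure.restrict_restrict measurableSet_Ioc, h1]
        have h2 : Set.Ioc 0 b ∩ Set.Ioi 0 = Set.Ioc 0 b :=
          Set.inter_eq_self_of_subset_left (fun y hy => hy.1)
        rw [h2]
      rw [hrw]
      -- Ioc 0 b = ⋃ k, Ioc (b/(k+1)) b
      have hseq_pos : ∀ k : ℕ, 0 < b / (k+1 : ℝ) := fun k => by positivity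
      have hUnion : (⋃ k : ℕ, Set.Ioc (b / (k+1 : ℝ)) b) = Set.Ioc 0 b := by
        ext y
        simp only [Set.mem_iUnion, Set.mem_Ioc]
        constructor
        · rintro ⟨k, hk1, hk2⟩; exact ⟨lt_trans (hseq_pos k) hk1, hk2⟩
        · rintro ⟨hy1, hy2⟩
          obtain ⟨k, hk⟩ := exists_nat_gt (b / y)
          refine ⟨k, ?_, hy2⟩
          rw [div_lt_iff₀ (by positivity)]
          calc b = (b / y) * y := by field_simp
          _ < (k : ℝ) * y := by apply mul_lt_mul_of_pos_right hk hy1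
          _ ≤ (k + 1 : ℝ) * y := by nlinarith
          _ = y * (k + 1 : ℝ) := by ring
      have hmonoSet : Monotone (fun k : ℕ => Set.Ioc (b / (k+1 : ℝ)) b) := by
        intro k l hkl
        apply Set.Ioc_subset_Ioc_left
        gcongr
      rw [← hUnion, (hmonoSet.directed_le).measure_iUnion]
      have hval : ∀ k : ℕ, ν (Set.Ioc (b / (k+1 : ℝ)) b) = ENNReal.ofReal (H b - H (b / (k+1:ℝ))) := by
        intro k
        apply SW_nu_Ioc f n hn hsmooth H hH (hseq_pos k)
        rw [div_le_iff₀ (by positivity)]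
        nlinarith
      simp only [hval]
      -- sup = ofReal (H b)
      have hmono2 : Monotone (fun k : ℕ => ENNReal.ofReal (H b - H (b / (k+1:ℝ)))) := by
        intro k l hkl
        apply ENNReal.ofReal_le_ofReal
        apply sub_le_sub_left
        apply H.mono
        gcongr
      have htend1 : Tendsto (fun k : ℕ => ENNReal.ofReal (H b - H (b / (k+1:ℝ)))) atTop
          (nhds (⨆ k : ℕ, ENNReal.ofReal (H b - H (b / (k+1:ℝ))))) := tendsto_atTop_iSup hmono2
      have hseq0 : Tendsto (fun k : ℕ => b / (k+1 : ℝ)) atTop (nhdsWithin 0 (Set.Ioi 0)) := by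
        rw [tendsto_nhdsWithin_iff]
        constructor
        · have := (tendsto_const_div_atTop_nhds_zero_nat b).comp (tendsto_add_atTop_nat 1)
          apply this.congr
          intro k; simp
        · filter_upwards with k using hseq_pos k
      have htend2 : Tendsto (fun k : ℕ => ENNReal.ofReal (H b - H (b / (k+1:ℝ)))) atTop
          (nhds (ENNReal.ofReal (H b))) := by
        have hHk : Tendsto (fun k : ℕ => H (b / (k+1:ℝ))) atTop (nhds 0) :=
          (SWH_tendsto_zero f n hdecay H hH).comp hseq0
        have : Tendsto (fun k : ℕ => H b - H (b / (k+1:ℝ))) atTop (nhds (H b - 0)) :=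
          tendsto_const_nhds.sub hHk
        rw [sub_zero] at this
        exact (ENNReal.continuous_ofReal.continuousAt).tendsto.comp this
      exact (tendsto_nhds_unique htend1 htend2).symm

lemma SWg_zero_eq (f : ℝ → ℝ) : SWg f 0 = f := by
  simp [SWg, iteratedDerivWithin_zero]

lemma SW_parts (f : ℝ → ℝ) (n : ℕ) (hn : 2 ≤ n)
    (hsmooth : ContDiffOn ℝ (⊤ : ℕ∞) f (Set.Ioi 0))
    (hdecay : ∀ k ≤ n, Tendsto (fun x => x ^ k * iteratedDerivWithin k f (Set.Ioi 0) x)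
      atTop (nhds 0))
    (hsgn : ∀ k ≤ n, ∀ t : ℝ, 0 < t → 0 ≤ (-1:ℝ)^k * SWg f k t)
    {x : ℝ} (hx : 0 < x) :
    ∀ m : ℕ, m + 1 ≤ n →
      IntegrableOn (fun t => (t-x)^m * SWg f (m+1) t) (Set.Ioi x) ∧
      ∫ t in Set.Ioi x, (t-x)^m * SWg f (m+1) t
        = (-1:ℝ)^(m+1) * (Nat.factorial m) * f x := by
  intro m
  induction m with
  | zero =>
      intro _
      have hderiv : ∀ t ∈ Set.Ici x, HasDerivAt (fun t => -f t) (-SWg f 1 t) t := by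
        intro t ht
        have h0 := SWg_hasDerivAt f hsmooth 0 (lt_of_lt_of_le hx ht)
        rw [SWg_zero_eq f] at h0
        exact h0.neg
      have hnonneg : ∀ t ∈ Set.Ioi x, 0 ≤ -SWg f 1 t := by
        intro t ht
        have := hsgn 1 (by omega) t (lt_trans hx ht)
        simpa using this
      have htend : Tendsto (fun t => -f t) atTop (nhds 0) := by
        have h := hdecay 0 (by omega)
        simp only [pow_zero, one_mul, iteratedDerivWithin_zero] at h
        simpa using h.neg
      have hInt := integrableOn_Ioi_deriv_of_nonneg' hderiv hnonneg htend
      have hEq := integral_Ioi_of_hasDerivAt_of_nonneg' hderiv hnonneg htend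
      simp only [zero_add, pow_zero, one_mul, pow_one, Nat.factorial_zero, Nat.cast_one]
      constructor
      · have h5 : (fun t : ℝ => SWg f 1 t) = (fun t => -(-SWg f 1 t)) := by
          funext t; ring
        rw [h5]; exact hInt.neg
      · have h6 : ∫ t in Set.Ioi x, -SWg f 1 t = 0 - -f x := hEq
        rw [integral_neg] at h6
        linarith
  | succ m IH =>
      intro hm2
      obtain ⟨hIntA0, hIA0⟩ := IH (by omega)
      set A : ℝ → ℝ := fun t => (m+1 : ℝ) * ((t-x)^m * SWg f (m+1) t) with hA
      set B : ℝ → ℝ := fun t => (t-x)^(m+1) * SWg f (m+2) t with hB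
      have hIntA : IntegrableOn A (Set.Ioi x) := hIntA0.const_mul _
      have hIA : ∫ t in Set.Ioi x, A t
          = (m+1 : ℝ) * ((-1:ℝ)^(m+1) * (Nat.factorial m) * f x) := by
        rw [hA]
        rw [MeasureTheory.integral_const_mul, hIA0]
      set IA : ℝ := (m+1 : ℝ) * ((-1:ℝ)^(m+1) * (Nat.factorial m) * f x) with hIAdef
      set ε : ℝ := (-1:ℝ)^(m+2) with hεdef
      have hε2 : ε * ε = 1 := by
        rw [hεdef, ← pow_add]
        exact Even.neg_one_pow ⟨m+2, by ring⟩
      have hAcont : ContinuousOn A (Set.Ioi 0) :=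
        continuousOn_const.mul ((((continuous_id.sub continuous_const).pow m).continuousOn).mul
          (SWg_continuousOn f hsmooth (m+1)))
      set G : ℝ → ℝ := fun t => (t-x)^(m+1) * SWg f (m+1) t with hG
      set FA : ℝ → ℝ := fun t => ∫ s in x..t, A s with hFA
      have hWderiv : ∀ t ∈ Set.Ici x, HasDerivAt (fun t => ε * (G t - FA t)) (ε * B t) t := by
        intro t ht
        have ht0 : 0 < t := lt_of_lt_of_le hx ht
        have hp : HasDerivAt (fun t : ℝ => (t-x)^(m+1)) ((m+1 : ℝ) * (t-x)^m) t := by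
          have := ((hasDerivAt_id t).sub_const x).fun_pow (m+1)
          simpa using this
        have hq := SWg_hasDerivAt f hsmooth (m+1) ht0
        have hGd : HasDerivAt G (A t + B t) t := by
          have := hp.fun_mul hq
          refine this.congr_deriv ?_
          symm
          simp only [hA, hB]
          ring
        have hFAd : HasDerivAt FA (A t) t := by
          apply intervalIntegral.integral_hasDerivAt_right
          · apply ContinuousOn.intervalIntegrable
            apply hAcont.mono
            rw [Set.uIcc_of_le ht]
            intro y hy; exact lt_of_lt_of_le hx hy.1
          · exact ContinuousOn.stronglyMeasurableAtFilter isOpen_Ioi hAcont t ht0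
          · exact hAcont.continuousAt (isOpen_Ioi.mem_nhds ht0)
        have := (hGd.fun_sub hFAd).const_mul ε
        refine this.congr_deriv ?_
        symm
        ring
      have hWnonneg : ∀ t ∈ Set.Ioi x, 0 ≤ ε * B t := by
        intro t ht
        have hsg := hsgn (m+2) (by omega) t (lt_trans hx ht)
        have : ε * B t = (t-x)^(m+1) * ((-1:ℝ)^(m+2) * SWg f (m+2) t) := by
          simp only [hB, hεdef]; ring
        rw [this]
        exact mul_nonneg (pow_nonneg (sub_nonneg.2 (le_of_lt ht)) _) hsg
      have hGtend : Tendsto G atTop (nhds 0) := by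
        have h1 : Tendsto (fun t : ℝ => ((t-x)/t)^(m+1)) atTop (nhds 1) := by
          have hx0 : Tendsto (fun t : ℝ => x * t⁻¹) atTop (nhds 0) := by
            simpa using tendsto_inv_atTop_zero.const_mul x
          have : Tendsto (fun t : ℝ => 1 - x * t⁻¹) atTop (nhds (1 - 0)) :=
            tendsto_const_nhds.sub hx0
          rw [sub_zero] at this
          have h2 : Tendsto (fun t : ℝ => (1 - x * t⁻¹)^(m+1)) atTop (nhds 1) := by
            simpa using this.pow (m+1)
          apply h2.congr'
          filter_upwards [eventually_gt_atTop (0:ℝ)] with t ht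
          rw [sub_div, div_self ht.ne']
          ring_nf
        have h2 := hdecay (m+1) (by omega)
        have h3 := h1.mul h2
        rw [one_mul] at h3
        apply h3.congr'
        filter_upwards [eventually_gt_atTop (0:ℝ)] with t ht
        rw [hG, div_pow]
        field_simp
        simp only [SWg]
      have hFAtend : Tendsto FA atTop (nhds (∫ t in Set.Ioi x, A t)) :=
        intervalIntegral_tendsto_integral_Ioi x hIntA tendsto_id
      have hWtend : Tendsto (fun t => ε * (G t - FA t)) atTop (nhds (ε * (0 - IA))) := by
        rw [← hIA]
        exact (hGtend.sub hFAtend).const_mul ε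
      have hIntW := integrableOn_Ioi_deriv_of_nonneg' hWderiv hWnonneg hWtend
      have hEqW := integral_Ioi_of_hasDerivAt_of_nonneg' hWderiv hWnonneg hWtend
      have hWx : ε * (G x - FA x) = 0 := by
        simp [hG, hFA, intervalIntegral.integral_same]
      rw [hWx] at hEqW
      rw [MeasureTheory.integral_const_mul] at hEqW
      have hBint : ∫ t in Set.Ioi x, B t = -IA := by
        have h4 : ε * (ε * ∫ t in Set.Ioi x, B t) = ε * (ε * (0 - IA) - 0) := by rw [hEqW]
        rw [← mul_assoc, hε2, one_mul] at h4
        rw [h4]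
        rw [sub_zero, ← mul_assoc, hε2]
        ring
      constructor
      · have hBB : IntegrableOn (fun t => ε * (ε * B t)) (Set.Ioi x) volume :=
          hIntW.const_mul ε
        have heq : (fun t => ε * (ε * B t)) = B := by
          funext t; rw [← mul_assoc, hε2, one_mul]
        rwa [heq] at hBB
      · rw [hBint, hIAdef]
        push_cast [Nat.factorial_succ]
        ring

theorem schoenberg_williamson_inversion
    (f : ℝ → ℝ) (n : ℕ) (hn : 2 ≤ n)
    (hsmooth : ContDiffOn ℝ (⊤ : ℕ∞) f (Set.Ioi 0))
    (hmono : ∀ k < n, ∀ x ∈ Set.Ioi (0:ℝ),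
      0 ≤ (-1 : ℝ) ^ k * iteratedDerivWithin k f (Set.Ioi 0) x)
    (hdecay : ∀ k ≤ n, Tendsto (fun x => x ^ k * iteratedDerivWithin k f (Set.Ioi 0) x)
      atTop (nhds 0))
    (hf0 : Tendsto f (nhdsWithin 0 (Set.Ioi 0)) (nhds 1))
    (H : StieltjesFunction ℝ)
    (hH : ∀ u > (0:ℝ), H u =
      ∑ j ∈ Finset.range n,
        (-1 : ℝ) ^ j * iteratedDerivWithin j f (Set.Ioi 0) (1 / u) / (Nat.factorial j) *
          (1 / u) ^ j) :
    ∀ x > (0:ℝ), f x = ∫ u in Set.Ioi (0:ℝ), (max (1 - u * x) 0) ^ (n - 1) ∂H.measure := by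
  intro x hx
  have hsgn : ∀ k ≤ n, ∀ t : ℝ, 0 < t → 0 ≤ (-1:ℝ)^k * SWg f k t := by
    intro k hk t ht
    rcases eq_or_lt_of_le hk with rfl | hlt
    · exact SW_sign f k hn hsmooth H hH ht
    · exact hmono k hlt t ht
  obtain ⟨m, rfl⟩ : ∃ m, n = m + 2 := ⟨n - 2, by omega⟩
  have hm1 : m + 2 - 1 = m + 1 := by omega
  have hfacpos : (0:ℝ) < (Nat.factorial (m+1) : ℝ) := by positivity
  have hmeq := SW_measure_eq f (m+2) hn hsmooth hdecay H hH
  have hxinv : (0:ℝ) < x⁻¹ := inv_pos.2 hx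
  symm
  calc ∫ u in Set.Ioi (0:ℝ), (max (1 - u * x) 0) ^ (m + 2 - 1) ∂H.measure
      = ∫ u, (max (1 - u * x) 0) ^ (m+1)
          ∂((volume.restrict (Set.Ioi 0)).withDensity
            (fun u => ENNReal.ofReal (SWh f (m+2) u))) := by
        rw [hm1, ← hmeq]
    _ = ∫ u in Set.Ioi (0:ℝ), (SWh f (m+2) u).toNNReal • (max (1 - u * x) 0) ^ (m+1) := by
        have hmeas : AEMeasurable (fun u => (SWh f (m+2) u).toNNReal)
            (volume.restrict (Set.Ioi 0)) :=
          continuous_real_toNNReal.measurable.comp_aemeasurable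
            ((SWh_continuousOn f hsmooth (m+2)).aemeasurable measurableSet_Ioi)
        exact integral_withDensity_eq_integral_smul₀ hmeas _
    _ = ∫ u in Set.Ioi (0:ℝ), SWh f (m+2) u * (max (1 - u * x) 0) ^ (m+1) := by
        apply setIntegral_congr_fun measurableSet_Ioi
        intro u hu
        have hu0 : 0 < u := hu
        have h0 : 0 ≤ SWh f (m+2) u := by
          have hs := hsgn (m+2) le_rfl u⁻¹ (inv_pos.2 hu0)
          exact mul_nonneg (div_nonneg hs (by positivity))
            (pow_nonneg (inv_nonneg.2 hu0.le) _)
        simp only [NNReal.smul_def, Real.coe_toNNReal _ h0, smul_eq_mul]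
    _ = ∫ u in Set.Ioo (0:ℝ) x⁻¹, SWh f (m+2) u * (max (1 - u * x) 0) ^ (m+1) := by
        apply setIntegral_eq_of_subset_of_ae_diff_eq_zero
          measurableSet_Ioi.nullMeasurableSet
          (fun u hu => hu.1)
        filter_upwards with u hu
        obtain ⟨hu1, hu2⟩ := hu
        have hux : x⁻¹ ≤ u := by
          by_contra hc
          push_neg at hc
          exact hu2 ⟨hu1, hc⟩
        have : 1 - u * x ≤ 0 := by
          have : (1:ℝ) = x⁻¹ * x := by field_simp
          nlinarith
        rw [max_eq_right this, zero_pow (by omega), mul_zero]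
    _ = ∫ t in Set.Ioi x, |-(t^2)⁻¹| •
          (SWh f (m+2) t⁻¹ * (max (1 - t⁻¹ * x) 0) ^ (m+1)) := by
        have himg : (fun t : ℝ => t⁻¹) '' (Set.Ioi x) = Set.Ioo 0 x⁻¹ := by
          ext u
          simp only [Set.mem_image, Set.mem_Ioi, Set.mem_Ioo]
          constructor
          · rintro ⟨t, ht, rfl⟩
            have ht0 : 0 < t := lt_trans hx ht
            exact ⟨inv_pos.2 ht0, inv_strictAnti₀ hx ht⟩
          · rintro ⟨hu1, hu2⟩
            refine ⟨u⁻¹, ?_, inv_inv u⟩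
            have := inv_strictAnti₀ hu1 hu2
            rwa [inv_inv] at this
        rw [← himg]
        apply integral_image_eq_integral_abs_deriv_smul measurableSet_Ioi
        · intro t ht
          exact (hasDerivAt_inv (ne_of_gt (lt_trans hx ht))).hasDerivWithinAt
        · intro a _ b _ hab
          exact inv_injective hab
    _ = ∫ t in Set.Ioi x, (-1:ℝ)^(m+2) / (Nat.factorial (m+1)) *
          ((t - x)^(m+1) * SWg f (m+2) t) := by
        apply setIntegral_congr_fun measurableSet_Ioi
        intro t ht
        have ht0 : 0 < t := lt_trans hx ht
        have hmax : max (1 - t⁻¹ * x) 0 = 1 - t⁻¹ * x := by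
          apply max_eq_left
          rw [sub_nonneg, ← div_eq_inv_mul]
          exact (div_le_one ht0).2 (le_of_lt ht)
        have habs : |-(t^2)⁻¹| = (t^2)⁻¹ := by
          rw [abs_neg, abs_of_pos (by positivity)]
        dsimp only
        rw [smul_eq_mul, habs, hmax, SWh, inv_inv]
        have h1 : (1 - t⁻¹ * x) = (t - x)/t := by field_simp
        rw [h1, div_pow]
        rw [hm1]
        field_simp
        ring
    _ = f x := by
        rw [MeasureTheory.integral_const_mul]
        obtain ⟨-, hval⟩ := SW_parts f (m+2) hn hsmooth hdecay hsgn hx (m+1) le_rfl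
        rw [hval]
        have hs2 : (-1:ℝ)^(m+2) * (-1:ℝ)^(m+2) = 1 := by
          rw [← pow_add]
          exact Even.neg_one_pow ⟨m+2, by ring⟩
        have : (-1:ℝ)^(m+2) / (Nat.factorial (m+1)) *
            ((-1:ℝ)^(m+2) * (Nat.factorial (m+1)) * f x)
            = ((-1:ℝ)^(m+2) * (-1:ℝ)^(m+2)) *
              ((Nat.factorial (m+1) : ℝ) / (Nat.factorial (m+1))) * f x := by
          ring
        rw [this, hs2, div_self hfacpos.ne', one_mul, one_mul]
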